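/- arXiv:2106.07197 — 5 statements merged into one kernel-verified Lean document; each statement's English description precedes it below -/
import Mathlib

section
/- (Lemma 3.4, first part) Let Y : Fin d → Fin d → ℝ be curl-free. Then ReLU(Y) is the weighted adjacency matrix of a DAG: the edge relation E defined by E i j ↔ Y i j > 0 is acyclic, i.e. there is no vertex i with Relation.TransGen E i i. -/
/-! A curl-free matrix is a gradient, `Y i j = φ j - φ i` with the potential `φ = Y o ·` for any
base vertex `o`. Every edge of `ReLU(Y)` therefore strictly increases `φ`, so no closed walk exists. -/

theorem Relation.TransGen.lt_on {α β : Type*} [Preorder β] {r : α → α → Prop} {f : α → β}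
    (h : ∀ a b, r a b → f a < f b) {a b : α} (hab : TransGen r a b) : f a < f b := by
  simpa only [transGen_eq_self] using hab.lift f h

def IsCurlFree {ι : Type*} (Y : ι → ι → ℝ) : Prop :=
  ∀ i j k, Y i j + Y j k + Y k i = 0

theorem IsCurlFree.eq_sub {ι : Type*} {Y : ι → ι → ℝ} (hY : IsCurlFree Y) (o a b : ι) :
    Y a b = Y o b - Y o a := by
  linarith [hY o a b, hY o b o, hY o o o]

theorem IsCurlFree.not_transGen_pos_self {ι : Type*} {Y : ι → ι → ℝ} (hY : IsCurlFree Y)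
    (i : ι) : ¬ Relation.TransGen (fun a b => Y a b > 0) i i := fun hcycle =>
  have increases : ∀ a b, Y a b > 0 → Y i a < Y i b := fun a b hab => by
    linarith [hY.eq_sub i a b]
  lt_irrefl _ (hcycle.lt_on increases)

theorem relu_curlFree_is_dag_general (d : ℕ)
    (Y : Fin d → Fin d → ℝ)
    (hY : ∀ i j k : Fin d, Y i j + Y j k + Y k i = 0) :
    ¬ ∃ i : Fin d, Relation.TransGen (fun i j : Fin d => Y i j > 0) i i :=
  fun ⟨i, hcycle⟩ => IsCurlFree.not_transGen_pos_self hY i hcycle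

/-- Lemma 3.4 (first part): if `Y` is curl-free then the directed graph of
`ReLU(Y)`, with an edge `i → j` iff `Y i j > 0`, is acyclic. -/
theorem relu_curlFree_is_dag (d : ℕ) (hd : 1 ≤ d)
    (Y : Fin d → Fin d → ℝ)
    (hY : ∀ i j k : Fin d, Y i j + Y j k + Y k i = 0) :
    ¬ ∃ i : Fin d, Relation.TransGen (fun i j : Fin d => Y i j > 0) i i :=
  relu_curlFree_is_dag_general d Y hY
end

section
/- (Theorem 3.5) For every potential p : Fin d → ℝ and every skew-symmetric matrix W : Fin d → Fin d → ℝ, the matrix A defined by A i j = W i j * max (p j - p i) 0 (that is, A = W ∘ ReLU(grad p)) is the weighted adjacency matrix of a DAG: the edge relation E_A defined by E_A i j ↔ A i j ≠ 0 is acyclic, i.e. there is no vertex i with Relation.TransGen E_A i i. -/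
theorem Relation.TransGen.lt_of_forall_lt {α β : Type*} [Preorder β] {r : α → α → Prop}
    {f : α → β} (hf : ∀ a b, r a b → f a < f b) {a b : α} (h : Relation.TransGen r a b) :
    f a < f b := by
  induction h with
  | single hab => exact hf _ _ hab
  | tail _ hbc ih => exact ih.trans (hf _ _ hbc)

theorem lt_of_mul_max_sub_ne_zero {R : Type*} [Ring R] [LinearOrder R] [IsOrderedAddMonoid R]
    {w a b : R} (h : w * max (b - a) 0 ≠ 0) : a < b := by
  by_contra! hba
  exact h (by rw [max_eq_right (sub_nonpos.mpr hba), mul_zero])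

theorem hadamard_relu_grad_is_dag_general (d : ℕ)
    (p : Fin d → ℝ) (W : Fin d → Fin d → ℝ) :
    ¬ ∃ i : Fin d,
      Relation.TransGen (fun i j : Fin d => W i j * max (p j - p i) 0 ≠ 0) i i := by
  rintro ⟨i, hcycle⟩
  exact lt_irrefl (p i) (hcycle.lt_of_forall_lt fun _ _ => lt_of_mul_max_sub_ne_zero)

/-- Theorem 3.5: for every potential `p` and skew-symmetric `W`, the matrix
`A i j = W i j * max (p j - p i) 0` (i.e. `W ∘ ReLU(grad p)`) is the weighted
adjacency matrix of a DAG. -/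
theorem hadamard_relu_grad_is_dag (d : ℕ) (hd : 1 ≤ d)
    (p : Fin d → ℝ) (W : Fin d → Fin d → ℝ)
    (hW : ∀ i j : Fin d, W i j = -W j i) :
    ¬ ∃ i : Fin d,
      Relation.TransGen (fun i j : Fin d => W i j * max (p j - p i) 0 ≠ 0) i i :=
  hadamard_relu_grad_is_dag_general d p W
end

section
/- (Theorem 3.7) Let A : Fin d → Fin d → ℝ be the weighted adjacency matrix of a DAG, i.e. the edge relation E_A i j ↔ A i j ≠ 0 has no vertex i with Relation.TransGen E_A i i. Then there exist a skew-symmetric matrix W : Fin d → Fin d → ℝ and a potential p : Fin d → ℝ such that A i j = W i j * max (p j - p i) 0 for all i, j, and moreover p respects the topological order of the DAG: whenever there is a directed path from i to j (i.e. Relation.TransGen E_A i j), one has p i < p j. -/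
/-!
Take as potential `p j` the number of vertices from which `j` can be reached. Along a path
`i → j` every ancestor of `i` is an ancestor of `j`, and `i` itself is an ancestor of `j` but,
the graph being acyclic, not of `i`; so `p` increases strictly along paths. Then every edge
`i → j` has `p j - p i > 0`, and `W i j = (A i j + A j i) / (p j - p i)` works: at most one of
`A i j`, `A j i` is nonzero, and the ReLU kills the entry pointing against the order.
-/

section Potential

variable {α : Type*} (r : α → α → Prop)

noncomputable def predecessorCount (a : α) : ℕ := {b | r b a}.ncard

variable {r}

theorem predecessorCount_lt [Finite α] [IsTrans α r] [Std.Irrefl r] {a b : α} (hab : r a b) :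
    predecessorCount r a < predecessorCount r b :=
  Set.ncard_lt_ncard ⟨fun _ hca => _root_.trans hca hab, fun hsub => irrefl a (hsub hab)⟩

end Potential

/-- Where `p i = p j`, the witness `(A i j + A j i) / (p j - p i)` takes the junk value `0`,
which is harmless: it keeps `W` skew-symmetric and there the ReLU factor vanishes anyway. -/
theorem exists_skew_mul_relu_sub {ι 𝕜 : Type*} [Field 𝕜] [LinearOrder 𝕜] [IsStrictOrderedRing 𝕜]
    (A : ι → ι → 𝕜) (p : ι → 𝕜) (hA : ∀ i j, A i j ≠ 0 → p i < p j) :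
    ∃ W : ι → ι → 𝕜, (∀ i j, W i j = -W j i) ∧ ∀ i j, A i j = W i j * max (p j - p i) 0 := by
  refine ⟨fun i j => (A i j + A j i) / (p j - p i), fun i j => ?_, fun i j => ?_⟩ <;> dsimp only
  · rw [← neg_sub, div_neg, add_comm]
  · rcases lt_or_ge (p i) (p j) with hlt | hle
    · have hji : A j i = 0 := not_not.mp fun h => (hA j i h).not_gt hlt
      rw [max_eq_left (sub_pos.mpr hlt).le, hji, add_zero, div_mul_cancel₀ _ (sub_pos.mpr hlt).ne']
    · have hij : A i j = 0 := not_not.mp fun h => (hA i j h).not_ge hle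
      rw [max_eq_right (sub_nonpos.mpr hle), mul_zero, hij]

theorem dag_eq_hadamard_relu_grad_general (d : ℕ)
    (A : Fin d → Fin d → ℝ)
    (hA : ¬ ∃ i : Fin d, Relation.TransGen (fun a b : Fin d => A a b ≠ 0) i i) :
    ∃ (W : Fin d → Fin d → ℝ) (p : Fin d → ℝ),
      (∀ i j : Fin d, W i j = -W j i) ∧
      (∀ i j : Fin d, A i j = W i j * max (p j - p i) 0) ∧
      (∀ i j : Fin d, Relation.TransGen (fun a b : Fin d => A a b ≠ 0) i j → p i < p j) := by
  set path := Relation.TransGen (fun a b : Fin d => A a b ≠ 0)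
  have : Std.Irrefl path := ⟨fun i hi => hA ⟨i, hi⟩⟩
  let p : Fin d → ℝ := fun j => predecessorCount path j
  have hp : ∀ i j, path i j → p i < p j := fun _ _ hij =>
    Nat.cast_lt.mpr (predecessorCount_lt hij)
  obtain ⟨W, hskew, hAW⟩ := exists_skew_mul_relu_sub A p fun i j h => hp i j (.single h)
  exact ⟨W, p, hskew, hAW, hp⟩

/-- Theorem 3.7: every weighted adjacency matrix of a DAG can be written as
`W ∘ ReLU(grad p)` with `W` skew-symmetric and `p` respecting the topological
order of the DAG. -/
theorem dag_eq_hadamard_relu_grad (d : ℕ) (hd : 1 ≤ d)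
    (A : Fin d → Fin d → ℝ)
    (hA : ¬ ∃ i : Fin d, Relation.TransGen (fun a b : Fin d => A a b ≠ 0) i i) :
    ∃ (W : Fin d → Fin d → ℝ) (p : Fin d → ℝ),
      (∀ i j : Fin d, W i j = -W j i) ∧
      (∀ i j : Fin d, A i j = W i j * max (p j - p i) 0) ∧
      (∀ i j : Fin d, Relation.TransGen (fun a b : Fin d => A a b ≠ 0) i j → p i < p j) :=
  dag_eq_hadamard_relu_grad_general d A hA
end

section
/- (Theorem 3.1, equivalent DAG space) A matrix A : Fin d → Fin d → ℝ is the weighted adjacency matrix of a DAG if and only if it lies in the set { (i,j) ↦ W i j * max (p j - p i) 0 : W skew-symmetric, p : Fin d → ℝ }. That is: the edge relation E_A i j ↔ A i j ≠ 0 has no vertex i with Relation.TransGen E_A i i, if and only if there exist a skew-symmetric W and a potential p with A i j = W i j * max (p j - p i) 0 for all i, j. -/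
/-!
If `A` is acyclic, the number of strict ancestors of a vertex is a potential `p` that strictly
increases along every edge; then `W i j = (A i j + A j i) / (p j - p i)` is skew-symmetric and
recovers `A` on `ReLU(grad p)`, because at most one of `A i j`, `A j i` is nonzero (where
`p i = p j`, `x / 0 = 0` gives `W i j = 0`, harmless since `ReLU` vanishes there). Conversely,
`A = W ∘ ReLU(grad p)` forces `p` to increase strictly along edges, so no cycle can close.
-/

namespace Relation

variable {ι : Type*} {r : ι → ι → Prop}

theorem not_transGen_self_of_lt_of_rel {α : Type*} [Preorder α] (p : ι → α)
    (hp : ∀ a b, r a b → p a < p b) (i : ι) : ¬ TransGen r i i := fun hcyc =>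
  lt_irrefl (p i) (by simpa [transGen_eq_self] using hcyc.lift p hp)

open Classical in
theorem exists_nat_lt_of_rel_of_acyclic [Fintype ι] (hr : ∀ i, ¬ TransGen r i i) :
    ∃ p : ι → ℕ, ∀ a b, r a b → p a < p b := by
  refine ⟨fun i => (Finset.univ.filter (TransGen r · i)).card, fun a b hab => ?_⟩
  apply Finset.card_lt_card
  rw [Finset.ssubset_iff_of_subset
    (Finset.monotone_filter_right _ fun c _ hca => hca.tail hab)]
  exact ⟨a, by simpa using TransGen.single hab, by simpa using hr a⟩

end Relation

section HadamardReluGrad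

variable {ι : Type*} (A : ι → ι → ℝ)

theorem lt_of_eq_mul_max_sub_of_ne_zero {W : ι → ι → ℝ} {p : ι → ℝ}
    (hA : ∀ i j, A i j = W i j * max (p j - p i) 0) {a b : ι} (hab : A a b ≠ 0) :
    p a < p b := by
  by_contra! hle
  exact hab (by rw [hA, max_eq_right (by linarith), mul_zero])

theorem exists_skew_eq_mul_max_sub_of_lt {p : ι → ℝ}
    (hp : ∀ a b, A a b ≠ 0 → p a < p b) :
    ∃ W : ι → ι → ℝ, (∀ i j, W i j = -W j i) ∧ ∀ i j, A i j = W i j * max (p j - p i) 0 := by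
  refine ⟨fun i j => (A i j + A j i) / (p j - p i), fun i j => ?_, fun i j => ?_⟩
  · rw [← div_neg, neg_sub, add_comm]
  have hzero : ∀ a b, ¬ p a < p b → A a b = 0 := fun a b h => by_contra fun hab => h (hp a b hab)
  dsimp only
  rcases lt_or_ge (p i) (p j) with hlt | hge
  · rw [hzero j i hlt.not_gt, add_zero, max_eq_left (sub_pos.mpr hlt).le,
      div_mul_cancel₀ _ (sub_pos.mpr hlt).ne']
  · rw [max_eq_right (sub_nonpos.mpr hge), mul_zero]
    exact hzero i j hge.not_gt

end HadamardReluGrad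

theorem dag_iff_hadamard_relu_grad_general (d : ℕ)
    (A : Fin d → Fin d → ℝ) :
    (¬ ∃ i : Fin d, Relation.TransGen (fun a b : Fin d => A a b ≠ 0) i i) ↔
    (∃ (W : Fin d → Fin d → ℝ) (p : Fin d → ℝ),
      (∀ i j : Fin d, W i j = -W j i) ∧
      (∀ i j : Fin d, A i j = W i j * max (p j - p i) 0)) := by
  constructor
  · intro hacyc
    obtain ⟨p, hp⟩ := Relation.exists_nat_lt_of_rel_of_acyclic (not_exists.mp hacyc)
    obtain ⟨W, hskew, hA⟩ :=
      exists_skew_eq_mul_max_sub_of_lt A (p := fun i => (p i : ℝ))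
        fun a b hab => Nat.cast_lt.mpr (hp a b hab)
    exact ⟨W, _, hskew, hA⟩
  · rintro ⟨W, p, -, hA⟩ ⟨i, hcyc⟩
    exact Relation.not_transGen_self_of_lt_of_rel p
      (fun a b => lt_of_eq_mul_max_sub_of_ne_zero A hA) i hcyc

/-- Theorem 3.1 (equivalent DAG space): `A` is the weighted adjacency matrix of
a DAG iff `A = W ∘ ReLU(grad p)` for some skew-symmetric `W` and potential `p`. -/
theorem dag_iff_hadamard_relu_grad (d : ℕ) (hd : 1 ≤ d)
    (A : Fin d → Fin d → ℝ) :
    (¬ ∃ i : Fin d, Relation.TransGen (fun a b : Fin d => A a b ≠ 0) i i) ↔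
    (∃ (W : Fin d → Fin d → ℝ) (p : Fin d → ℝ),
      (∀ i j : Fin d, W i j = -W j i) ∧
      (∀ i j : Fin d, A i j = W i j * max (p j - p i) 0)) :=
  dag_iff_hadamard_relu_grad_general d A
end

section
/- (Theorem 4.3, order preservation) Let A : Fin d → Fin d → ℝ be the weighted adjacency matrix of a DAG, i.e. the edge relation E_A i j ↔ A i j ≠ 0 has no vertex i with Relation.TransGen E_A i i. Let C : Fin d → Fin d → ℝ be the connectivity matrix, C i j = 1 if Relation.TransGen E_A i j and C i j = 0 otherwise, and define the potential p : Fin d → ℝ by p i := (1/(2*d)) * Σ_k (C k i - C i k) (this is the Hodge projection of the skew-symmetric part (1/2)(C - Cᵀ) of the connectivity matrix). Then p preserves the topological order of A quantitatively: whenever Relation.TransGen E_A i j, one has p j - p i ≥ 1/d; in particular p i < p j whenever there is a directed path from i to j. -/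
/-! If `i` reaches `j`, then everything reaching `i` also reaches `j` and everything reachable
from `j` is reachable from `i`, so each term of `∑ₖ (C k j - C j k) - ∑ₖ (C k i - C i k)` is
nonnegative; acyclicity makes the terms `k = i` and `k = j` both equal to `1`. Hence the sums differ
by at least `2`, and `p j - p i ≥ 2 / (2 d)`. -/

section IndicatorOfRelation

variable {α : Type*} {r : α → α → Prop} {C : α → α → ℝ}
  (hC₁ : ∀ a b, r a b → C a b = 1) (hC₀ : ∀ a b, ¬ r a b → C a b = 0)
include hC₁ hC₀

theorem indicator_le_of_imp {a b a' b' : α} (h : r a b → r a' b') : C a b ≤ C a' b' := by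
  by_cases hab : r a b
  · rw [hC₁ a b hab, hC₁ a' b' (h hab)]
  · rw [hC₀ a b hab]
    by_cases hab' : r a' b'
    · rw [hC₁ a' b' hab']; exact zero_le_one
    · rw [hC₀ a' b' hab']

theorem two_le_sum_sub_sum_of_rel [Fintype α]
    (htrans : ∀ a b c, r a b → r b c → r a c) (hirr : ∀ a, ¬ r a a)
    {i j : α} (hij : r i j) :
    2 ≤ ∑ k, (C k j - C j k) - ∑ k, (C k i - C i k) := by
  classical
  have hji : ¬ r j i := fun h => hirr i (htrans _ _ _ hij h)
  have hne : i ≠ j := by rintro rfl; exact hirr i hij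
  have hterm_nonneg : ∀ k, 0 ≤ (C k j - C j k) - (C k i - C i k) := fun k => by
    have hin : C k i ≤ C k j := indicator_le_of_imp hC₁ hC₀ fun h => htrans _ _ _ h hij
    have hout : C j k ≤ C i k := indicator_le_of_imp hC₁ hC₀ fun h => htrans _ _ _ hij h
    linarith
  have hterm_ends : ∀ k ∈ ({i, j} : Finset α), (C k j - C j k) - (C k i - C i k) = 1 := by
    simp only [Finset.mem_insert, Finset.mem_singleton]
    rintro k (rfl | rfl) <;> simp [hC₁ _ _ hij, hC₀ _ _ hji, hC₀ _ _ (hirr _)]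
  calc (2 : ℝ) = ∑ k ∈ {i, j}, ((C k j - C j k) - (C k i - C i k)) := by
        rw [Finset.sum_congr rfl hterm_ends, Finset.sum_const, Finset.card_pair hne]; norm_num
    _ ≤ ∑ k, ((C k j - C j k) - (C k i - C i k)) :=
        Finset.sum_le_sum_of_subset_of_nonneg (Finset.subset_univ _)
          fun k _ _ => hterm_nonneg k
    _ = ∑ k, (C k j - C j k) - ∑ k, (C k i - C i k) := Finset.sum_sub_distrib _ _

end IndicatorOfRelation

theorem connectivity_projection_preserves_order_general (d : ℕ)
    (A : Fin d → Fin d → ℝ)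
    (hA : ¬ ∃ i : Fin d, Relation.TransGen (fun a b : Fin d => A a b ≠ 0) i i)
    (C : Fin d → Fin d → ℝ)
    (hC₁ : ∀ i j : Fin d,
      Relation.TransGen (fun a b : Fin d => A a b ≠ 0) i j → C i j = 1)
    (hC₀ : ∀ i j : Fin d,
      ¬ Relation.TransGen (fun a b : Fin d => A a b ≠ 0) i j → C i j = 0)
    (p : Fin d → ℝ)
    (hp : ∀ i : Fin d, p i = (1 / (2 * (d : ℝ))) * ∑ k, (C k i - C i k)) :
    ∀ i j : Fin d, Relation.TransGen (fun a b : Fin d => A a b ≠ 0) i j →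
      1 / (d : ℝ) ≤ p j - p i ∧ p i < p j := by
  intro i j hij
  have hd : (0 : ℝ) < d := Nat.cast_pos.mpr i.pos
  have hgap := two_le_sum_sub_sum_of_rel hC₁ hC₀ (fun _ _ _ => .trans)
    (fun a h => hA ⟨a, h⟩) hij
  have hbound : 1 / (d : ℝ) ≤ p j - p i :=
    calc 1 / (d : ℝ) = 1 / (2 * d) * 2 := by field_simp
      _ ≤ 1 / (2 * d) * (∑ k, (C k j - C j k) - ∑ k, (C k i - C i k)) := by gcongr
      _ = p j - p i := by rw [hp i, hp j, mul_sub]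
  exact ⟨hbound, by linarith [one_div_pos.mpr hd]⟩

/-- Theorem 4.3 (order preservation): the Hodge projection of the
skew-symmetric part of the connectivity matrix of a DAG preserves the
topological order quantitatively: `p j - p i ≥ 1/d` whenever there is a
directed path from `i` to `j`; in particular `p i < p j`. -/
theorem connectivity_projection_preserves_order (d : ℕ) (hd : 1 ≤ d)
    (A : Fin d → Fin d → ℝ)
    (hA : ¬ ∃ i : Fin d, Relation.TransGen (fun a b : Fin d => A a b ≠ 0) i i)
    (C : Fin d → Fin d → ℝ)
    (hC₁ : ∀ i j : Fin d,
      Relation.TransGen (fun a b : Fin d => A a b ≠ 0) i j → C i j = 1)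
    (hC₀ : ∀ i j : Fin d,
      ¬ Relation.TransGen (fun a b : Fin d => A a b ≠ 0) i j → C i j = 0)
    (p : Fin d → ℝ)
    (hp : ∀ i : Fin d, p i = (1 / (2 * (d : ℝ))) * ∑ k, (C k i - C i k)) :
    ∀ i j : Fin d, Relation.TransGen (fun a b : Fin d => A a b ≠ 0) i j →
      1 / (d : ℝ) ≤ p j - p i ∧ p i < p j :=
  connectivity_projection_preserves_order_general d A hA C hC₁ hC₀ p hp
end
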